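/- Let f : ℂ → ℂ² be holomorphic and nowhere vanishing, and suppose P₊f is nowhere vanishing. Then P₊²f = P₊(P₊f) vanishes identically on ℂ. (This is the case of the embedding of CP¹ into CP², where the harmonic sequence terminates.) -/

import Mathlib

open Complex Matrix

/-- Wirtinger derivative ∂ = (∂/∂ζ₁ − i ∂/∂ζ₂)/2 of a map ℂ → ℂ. -/
noncomputable def wD (f : ℂ → ℂ) (z : ℂ) : ℂ :=
  (fderiv ℝ f z 1 - Complex.I * fderiv ℝ f z Complex.I) / 2

/-- Anti-Wirtinger derivative ∂̄ = (∂/∂ζ₁ + i ∂/∂ζ₂)/2 of a map ℂ → ℂ. -/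
noncomputable def wDbar (f : ℂ → ℂ) (z : ℂ) : ℂ :=
  (fderiv ℝ f z 1 + Complex.I * fderiv ℝ f z Complex.I) / 2

/-- Componentwise Wirtinger derivative for vector-valued maps. -/
noncomputable def wDV {N : ℕ} (f : ℂ → Fin N → ℂ) (z : ℂ) : Fin N → ℂ :=
  fun i => wD (fun w => f w i) z

/-- Componentwise anti-Wirtinger derivative for vector-valued maps. -/
noncomputable def wDbarV {N : ℕ} (f : ℂ → Fin N → ℂ) (z : ℂ) : Fin N → ℂ :=
  fun i => wDbar (fun w => f w i) z

/-- Hermitian inner product a†·b = Σᵢ āᵢ bᵢ on ℂ^N. -/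
noncomputable def herm {N : ℕ} (a b : Fin N → ℂ) : ℂ :=
  ∑ i, (starRingEnd ℂ) (a i) * b i

/-- Squared norm |a|² as a real number. -/
noncomputable def nsq {N : ℕ} (a : Fin N → ℂ) : ℝ :=
  ∑ i, Complex.normSq (a i)

/-- The operator P₊ g = ∂g − g (g†·∂g)/|g|². -/
noncomputable def Pp {N : ℕ} (g : ℂ → Fin N → ℂ) : ℂ → Fin N → ℂ :=
  fun z i => wDV g z i - g z i * (herm (g z) (wDV g z) / herm (g z) (g z))

/-- Iterates of P₊ : P₊⁰ g = g, P₊^{k+1} g = P₊ (P₊^k g). -/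
noncomputable def PpIter {N : ℕ} (g : ℂ → Fin N → ℂ) : ℕ → (ℂ → Fin N → ℂ)
  | 0 => g
  | k + 1 => Pp (PpIter g k)

/-- The projector P(V) = V ⊗ V† / |V|². -/
noncomputable def proj {N : ℕ} (V : ℂ → Fin N → ℂ) (z : ℂ) : Matrix (Fin N) (Fin N) ℂ :=
  fun i j => V z i * (starRingEnd ℂ) (V z j) / herm (V z) (V z)

/-- Entrywise Wirtinger derivative for matrix-valued maps. -/
noncomputable def wDM {N : ℕ} (M : ℂ → Matrix (Fin N) (Fin N) ℂ) (z : ℂ) :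
    Matrix (Fin N) (Fin N) ℂ :=
  fun i j => wD (fun w => M w i j) z

/-- Entrywise anti-Wirtinger derivative for matrix-valued maps. -/
noncomputable def wDbarM {N : ℕ} (M : ℂ → Matrix (Fin N) (Fin N) ℂ) (z : ℂ) :
    Matrix (Fin N) (Fin N) ℂ :=
  fun i j => wDbar (fun w => M w i j) z


section Aux

lemma wD_eq_deriv {g : ℂ → ℂ} {z : ℂ} (hg : DifferentiableAt ℂ g z) :
    wD g z = deriv g z := by
  have h1 : fderiv ℝ g z = (fderiv ℂ g z).restrictScalars ℝ :=
    (hg.hasFDerivAt.restrictScalars ℝ).fderiv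
  have hI : fderiv ℂ g z Complex.I = Complex.I * deriv g z := by
    have := (fderiv ℂ g z).map_smul Complex.I (1 : ℂ)
    simpa [smul_eq_mul, fderiv_apply_one_eq_deriv] using this
  rw [wD, h1]
  simp only [ContinuousLinearMap.coe_restrictScalars', hI, fderiv_apply_one_eq_deriv]
  ring_nf
  rw [Complex.I_sq]
  ring

lemma wDbar_eq_zero {g : ℂ → ℂ} {z : ℂ} (hg : DifferentiableAt ℂ g z) :
    wDbar g z = 0 := by
  have h1 : fderiv ℝ g z = (fderiv ℂ g z).restrictScalars ℝ :=
    (hg.hasFDerivAt.restrictScalars ℝ).fderiv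
  have hI : fderiv ℂ g z Complex.I = Complex.I * deriv g z := by
    have := (fderiv ℂ g z).map_smul Complex.I (1 : ℂ)
    simpa [smul_eq_mul, fderiv_apply_one_eq_deriv] using this
  rw [wDbar, h1]
  simp only [ContinuousLinearMap.coe_restrictScalars', hI, fderiv_apply_one_eq_deriv]
  ring_nf
  rw [Complex.I_sq]
  ring

lemma wD_conj {g : ℂ → ℂ} {z : ℂ} (hg : DifferentiableAt ℝ g z) :
    wD (fun w => (starRingEnd ℂ) (g w)) z = (starRingEnd ℂ) (wDbar g z) := by
  have hc : (fun w => (starRingEnd ℂ) (g w)) = (Complex.conjCLE : ℂ → ℂ) ∘ g := rfl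
  have h1 : fderiv ℝ (fun w => (starRingEnd ℂ) (g w)) z
      = (Complex.conjCLE : ℂ ≃L[ℝ] ℂ).toContinuousLinearMap.comp (fderiv ℝ g z) := by
    rw [hc]
    rw [fderiv_comp z (Complex.conjCLE.differentiableAt) hg]
    congr 1
    exact Complex.conjCLE.fderiv
  rw [wD, wDbar, h1]
  simp only [ContinuousLinearMap.coe_comp', Function.comp_apply,
    ContinuousLinearEquiv.coe_coe, Complex.conjCLE_apply]
  rw [map_div₀, map_add, _root_.map_mul, Complex.conj_I]
  simp only [map_ofNat]
  ring

lemma wD_mul {u v : ℂ → ℂ} {z : ℂ} (hu : DifferentiableAt ℝ u z) (hv : DifferentiableAt ℝ v z) :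
    wD (fun w => u w * v w) z = wD u z * v z + u z * wD v z := by
  rw [wD, wD, wD, fderiv_fun_mul hu hv]
  simp only [ContinuousLinearMap.add_apply, ContinuousLinearMap.smul_apply, smul_eq_mul]
  ring

lemma wD_add {u v : ℂ → ℂ} {z : ℂ} (hu : DifferentiableAt ℝ u z) (hv : DifferentiableAt ℝ v z) :
    wD (fun w => u w + v w) z = wD u z + wD v z := by
  rw [wD, wD, wD, fderiv_fun_add hu hv]
  simp only [ContinuousLinearMap.add_apply]
  ring

lemma herm_self_ne {v : Fin 2 → ℂ} (hv : v ≠ 0) : herm v v ≠ 0 := by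
  have h : herm v v = ((Complex.normSq (v 0) + Complex.normSq (v 1) : ℝ) : ℂ) := by
    simp [herm, Fin.sum_univ_two, mul_comm, Complex.mul_conj]
  rw [h]
  intro hc
  rw [Complex.ofReal_eq_zero] at hc
  have h0 : Complex.normSq (v 0) = 0 := by
    nlinarith [Complex.normSq_nonneg (v 0), Complex.normSq_nonneg (v 1)]
  have h1 : Complex.normSq (v 1) = 0 := by
    nlinarith [Complex.normSq_nonneg (v 0), Complex.normSq_nonneg (v 1)]
  apply hv
  funext i
  fin_cases i
  · simpa using Complex.normSq_eq_zero.mp h0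
  · simpa using Complex.normSq_eq_zero.mp h1

lemma ortho2 {u v g : Fin 2 → ℂ} (hu : herm u u ≠ 0) (hv : v ≠ 0) (huv : herm u v = 0)
    (hug : herm u g = 0) (hvg : herm v g = 0) : g = 0 := by
  simp only [herm, Fin.sum_univ_two] at hu huv hug hvg
  have hdet : u 0 * v 1 - u 1 * v 0 ≠ 0 := by
    intro h
    have h0 : ((starRingEnd ℂ) (u 0) * u 0 + (starRingEnd ℂ) (u 1) * u 1) * v 0 = 0 := by
      linear_combination u 0 * huv - (starRingEnd ℂ) (u 1) * h
    have h1 : ((starRingEnd ℂ) (u 0) * u 0 + (starRingEnd ℂ) (u 1) * u 1) * v 1 = 0 := by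
      linear_combination u 1 * huv + (starRingEnd ℂ) (u 0) * h
    have hv0 : v 0 = 0 := by
      rcases mul_eq_zero.mp h0 with h' | h'
      · exact absurd h' hu
      · exact h'
    have hv1 : v 1 = 0 := by
      rcases mul_eq_zero.mp h1 with h' | h'
      · exact absurd h' hu
      · exact h'
    exact hv (funext fun i => by fin_cases i <;> simp [hv0, hv1])
  have hdetc : (starRingEnd ℂ) (u 0) * (starRingEnd ℂ) (v 1)
      - (starRingEnd ℂ) (u 1) * (starRingEnd ℂ) (v 0) ≠ 0 := by
    intro h
    apply hdet
    have h2 := congrArg (starRingEnd ℂ) h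
    simpa [map_sub, _root_.map_mul] using h2
  have hg0 : g 0 = 0 := by
    have h3 : ((starRingEnd ℂ) (u 0) * (starRingEnd ℂ) (v 1)
        - (starRingEnd ℂ) (u 1) * (starRingEnd ℂ) (v 0)) * g 0 = 0 := by
      linear_combination (starRingEnd ℂ) (v 1) * hug - (starRingEnd ℂ) (u 1) * hvg
    rcases mul_eq_zero.mp h3 with h' | h'
    · exact absurd h' hdetc
    · exact h'
  have hg1 : g 1 = 0 := by
    have h3 : ((starRingEnd ℂ) (u 0) * (starRingEnd ℂ) (v 1)
        - (starRingEnd ℂ) (u 1) * (starRingEnd ℂ) (v 0)) * g 1 = 0 := by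
      linear_combination (starRingEnd ℂ) (u 0) * hvg - (starRingEnd ℂ) (v 0) * hug
    rcases mul_eq_zero.mp h3 with h' | h'
    · exact absurd h' hdetc
    · exact h'
  funext i
  fin_cases i <;> simp [hg0, hg1]

end Aux

/-- For `f : ℂ → ℂ²` holomorphic and nowhere vanishing with `P₊f`
nowhere vanishing, `P₊²f` vanishes identically (CP¹ inside CP²). -/
theorem stmt_10 (f : ℂ → Fin 2 → ℂ)
    (hf : ∀ i, Differentiable ℂ fun z => f z i)
    (hf0 : ∀ z, f z ≠ 0) (hPf0 : ∀ z, Pp f z ≠ 0) :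
    ∀ ζ : ℂ, Pp (Pp f) ζ = 0 := by
  intro ζ
  set F : Fin 2 → ℂ → ℂ := fun i => deriv (fun w => f w i) with hFdef
  have hwD : ∀ (z : ℂ) (i : Fin 2), wDV f z i = F i z := fun z i => wD_eq_deriv ((hf i) z)
  have hFd : ∀ i, Differentiable ℂ (F i) := by
    intro i z
    have h1 : AnalyticAt ℂ (fun w => f w i) z := (hf i).analyticAt z
    have h2 : DifferentiableAt ℂ (fderiv ℂ (fun w => f w i)) z := h1.fderiv.differentiableAt
    have h3 : DifferentiableAt ℂ (fun y => fderiv ℂ (fun w => f w i) y 1) z :=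
      h2.clm_apply (differentiableAt_const 1)
    have h4 : F i = fun y => fderiv ℂ (fun w => f w i) y 1 :=
      funext fun y => (fderiv_apply_one_eq_deriv).symm
    rw [h4]
    exact h3
  have hfR : ∀ (i : Fin 2) (z : ℂ), DifferentiableAt ℝ (fun w => f w i) z :=
    fun i z => ((hf i) z).restrictScalars ℝ
  have hFR : ∀ (i : Fin 2) (z : ℂ), DifferentiableAt ℝ (F i) z :=
    fun i z => ((hFd i) z).restrictScalars ℝ
  have hconjR : ∀ (i : Fin 2) (z : ℂ),
      DifferentiableAt ℝ (fun w => (starRingEnd ℂ) (f w i)) z := by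
    intro i z
    exact (Complex.conjCLE.differentiable.differentiableAt).comp z (hfR i z)
  have hden : ∀ z : ℂ, herm (f z) (f z) ≠ 0 := fun z => herm_self_ne (hf0 z)
  have hPpf : ∀ (z : ℂ) (i : Fin 2), Pp f z i =
      F i z - f z i * (((starRingEnd ℂ) (f z 0) * F 0 z + (starRingEnd ℂ) (f z 1) * F 1 z) /
        ((starRingEnd ℂ) (f z 0) * f z 0 + (starRingEnd ℂ) (f z 1) * f z 1)) := by
    intro z i
    simp only [Pp, herm, Fin.sum_univ_two, hwD]
  have hPpR : ∀ (i : Fin 2) (z : ℂ), DifferentiableAt ℝ (fun w => Pp f w i) z := by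
    intro i z
    have heq : (fun w => Pp f w i) = fun w =>
        F i w - f w i * (((starRingEnd ℂ) (f w 0) * F 0 w + (starRingEnd ℂ) (f w 1) * F 1 w) /
          ((starRingEnd ℂ) (f w 0) * f w 0 + (starRingEnd ℂ) (f w 1) * f w 1)) :=
      funext fun w => hPpf w i
    rw [heq]
    have hd0 : (starRingEnd ℂ) (f z 0) * f z 0 + (starRingEnd ℂ) (f z 1) * f z 1 ≠ 0 := by
      have := hden z
      simpa [herm, Fin.sum_univ_two] using this
    have hnum : DifferentiableAt ℝ
        (fun w => (starRingEnd ℂ) (f w 0) * F 0 w + (starRingEnd ℂ) (f w 1) * F 1 w) z :=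
      ((hconjR 0 z).mul (hFR 0 z)).add ((hconjR 1 z).mul (hFR 1 z))
    have hden2 : DifferentiableAt ℝ
        (fun w => (starRingEnd ℂ) (f w 0) * f w 0 + (starRingEnd ℂ) (f w 1) * f w 1) z :=
      ((hconjR 0 z).mul (hfR 0 z)).add ((hconjR 1 z).mul (hfR 1 z))
    simp only [div_eq_mul_inv]
    exact (hFR i z).sub ((hfR i z).mul (hnum.mul (hden2.inv hd0)))
  have hA : ∀ z : ℂ, herm (f z) (Pp f z) = 0 := by
    intro z
    have hd : (starRingEnd ℂ) (f z 0) * f z 0 + (starRingEnd ℂ) (f z 1) * f z 1 ≠ 0 := by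
      have := hden z
      simpa [herm, Fin.sum_univ_two] using this
    simp only [herm, Fin.sum_univ_two, Pp]
    field_simp
    ring
  -- Step C1 : herm (f ζ) (wDV (Pp f) ζ) = 0
  have hC1 : (starRingEnd ℂ) (f ζ 0) * wDV (Pp f) ζ 0
      + (starRingEnd ℂ) (f ζ 1) * wDV (Pp f) ζ 1 = 0 := by
    have hphi : (fun w => (starRingEnd ℂ) (f w 0) * Pp f w 0
        + (starRingEnd ℂ) (f w 1) * Pp f w 1) = fun _ => (0 : ℂ) := by
      funext w
      have := hA w
      simpa [herm, Fin.sum_univ_two] using this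
    have hz : wD (fun w => (starRingEnd ℂ) (f w 0) * Pp f w 0
        + (starRingEnd ℂ) (f w 1) * Pp f w 1) ζ = 0 := by
      rw [hphi]
      simp [wD]
    have step : wD (fun w => (starRingEnd ℂ) (f w 0) * Pp f w 0
          + (starRingEnd ℂ) (f w 1) * Pp f w 1) ζ
        = wD (fun w => (starRingEnd ℂ) (f w 0) * Pp f w 0) ζ
          + wD (fun w => (starRingEnd ℂ) (f w 1) * Pp f w 1) ζ :=
      wD_add ((hconjR 0 ζ).mul (hPpR 0 ζ)) ((hconjR 1 ζ).mul (hPpR 1 ζ))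
    have p0 : wD (fun w => (starRingEnd ℂ) (f w 0) * Pp f w 0) ζ
        = wD (fun w => (starRingEnd ℂ) (f w 0)) ζ * Pp f ζ 0
          + (starRingEnd ℂ) (f ζ 0) * wD (fun w => Pp f w 0) ζ :=
      wD_mul (hconjR 0 ζ) (hPpR 0 ζ)
    have p1 : wD (fun w => (starRingEnd ℂ) (f w 1) * Pp f w 1) ζ
        = wD (fun w => (starRingEnd ℂ) (f w 1)) ζ * Pp f ζ 1
          + (starRingEnd ℂ) (f ζ 1) * wD (fun w => Pp f w 1) ζ :=
      wD_mul (hconjR 1 ζ) (hPpR 1 ζ)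
    have hc0 : wD (fun w => (starRingEnd ℂ) (f w 0)) ζ = 0 := by
      rw [wD_conj (hfR 0 ζ), wDbar_eq_zero ((hf 0) ζ)]
      simp
    have hc1 : wD (fun w => (starRingEnd ℂ) (f w 1)) ζ = 0 := by
      rw [wD_conj (hfR 1 ζ), wDbar_eq_zero ((hf 1) ζ)]
      simp
    rw [step, p0, p1, hc0, hc1] at hz
    have hz' : (starRingEnd ℂ) (f ζ 0) * wD (fun w => Pp f w 0) ζ
        + (starRingEnd ℂ) (f ζ 1) * wD (fun w => Pp f w 1) ζ = 0 := by
      linear_combination hz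
    exact hz'
  have hgdef : ∀ i : Fin 2, Pp (Pp f) ζ i = wDV (Pp f) ζ i
      - Pp f ζ i * (herm (Pp f ζ) (wDV (Pp f) ζ) / herm (Pp f ζ) (Pp f ζ)) := fun i => rfl
  have hB2 : herm (Pp f ζ) (Pp f ζ) ≠ 0 := herm_self_ne (hPf0 ζ)
  have hA' : (starRingEnd ℂ) (f ζ 0) * Pp f ζ 0 + (starRingEnd ℂ) (f ζ 1) * Pp f ζ 1 = 0 := by
    have := hA ζ
    simpa [herm, Fin.sum_univ_two] using this
  have hC : herm (f ζ) (Pp (Pp f) ζ) = 0 := by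
    have e : herm (f ζ) (Pp (Pp f) ζ)
        = ((starRingEnd ℂ) (f ζ 0) * wDV (Pp f) ζ 0 + (starRingEnd ℂ) (f ζ 1) * wDV (Pp f) ζ 1)
          - ((starRingEnd ℂ) (f ζ 0) * Pp f ζ 0 + (starRingEnd ℂ) (f ζ 1) * Pp f ζ 1)
            * (herm (Pp f ζ) (wDV (Pp f) ζ) / herm (Pp f ζ) (Pp f ζ)) := by
      simp only [herm, Fin.sum_univ_two, hgdef]
      ring
    rw [e, hC1, hA']
    ring
  have hB : herm (Pp f ζ) (Pp (Pp f) ζ) = 0 := by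
    have e : herm (Pp f ζ) (Pp (Pp f) ζ)
        = herm (Pp f ζ) (wDV (Pp f) ζ)
          - herm (Pp f ζ) (Pp f ζ)
            * (herm (Pp f ζ) (wDV (Pp f) ζ) / herm (Pp f ζ) (Pp f ζ)) := by
      simp only [herm, Fin.sum_univ_two, hgdef]
      ring
    rw [e]
    field_simp
    ring
  exact ortho2 (hden ζ) (hPf0 ζ) (hA ζ) hC hB
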